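/- Suppose P and Q are ranked posets with least elements such that the wedge product P wedge Q is Macaulay with respect to a total order O, and all elements of rank 1 of Q form an initial segment of P wedge Q. Then both P and Q are Macaulay with respect to the restrictions of O. -/

import Mathlib

open Finset

instance {α : Type*} [Fintype α] : Fintype (WithBot α) := inferInstanceAs (Fintype (Option α))
instance {α : Type*} [Fintype α] : Fintype (WithTop α) := inferInstanceAs (Fintype (Option α))

variable {α : Type*}

open Classical in
noncomputable def shadow [PartialOrder α] [Fintype α] (A : Finset α) : Finset α :=
  Finset.univ.filter (fun b => ∃ a ∈ A, a ⋖ b)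

def IsRankFn [PartialOrder α] (rank : α → ℕ) : Prop :=
  (∃ x, rank x = 0 ∧ ∀ y, x ≤ y) ∧ ∀ a b : α, a ⋖ b → rank b = rank a + 1

def IsInitSeg [PartialOrder α] (rank : α → ℕ) (lt : α → α → Prop) (d : ℕ)
    (S : Finset α) : Prop :=
  (∀ x ∈ S, rank x = d) ∧ ∀ a ∈ S, ∀ b, rank b = d → lt a b → b ∈ S

def MacaulayWith [PartialOrder α] [Fintype α] (rank : α → ℕ)
    (lt : α → α → Prop) : Prop :=
  IsTrichotomous α lt ∧ IsTrans α lt ∧ IsIrrefl α lt ∧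
  (∀ d (A S : Finset α), (∀ x ∈ A, rank x = d) → IsInitSeg rank lt d S →
    S.card = A.card → (shadow S).card ≤ (shadow A).card) ∧
  (∀ d (S : Finset α), IsInitSeg rank lt d S → IsInitSeg rank lt (d + 1) (shadow S))

def IsMacaulay [PartialOrder α] [Fintype α] (rank : α → ℕ) : Prop :=
  ∃ lt : α → α → Prop, MacaulayWith rank lt

abbrev Wedge (P Q : Type*) [PartialOrder P] [PartialOrder Q] [OrderBot P] [OrderBot Q] :=
  WithBot ({p : P // p ≠ ⊥} ⊕ {q : Q // q ≠ ⊥})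

def wedgeRank {P Q : Type*} [PartialOrder P] [PartialOrder Q] [OrderBot P] [OrderBot Q]
    (rP : P → ℕ) (rQ : Q → ℕ) : Wedge P Q → ℕ :=
  WithBot.recBotCoe 0 (Sum.elim (fun p => rP p.1) (fun q => rQ q.1))

open Classical in
noncomputable def wedgeInl {P Q : Type*} [PartialOrder P] [PartialOrder Q] [OrderBot P]
    [OrderBot Q] (p : P) : Wedge P Q :=
  if h : p = ⊥ then ⊥ else
    ((Sum.inl ⟨p, h⟩ : {p : P // p ≠ ⊥} ⊕ {q : Q // q ≠ ⊥}) : Wedge P Q)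

open Classical in
noncomputable def wedgeInr {P Q : Type*} [PartialOrder P] [PartialOrder Q] [OrderBot P]
    [OrderBot Q] (q : Q) : Wedge P Q :=
  if h : q = ⊥ then ⊥ else
    ((Sum.inr ⟨q, h⟩ : {p : P // p ≠ ⊥} ⊕ {q : Q // q ≠ ⊥}) : Wedge P Q)

abbrev Diamond (P Q : Type*) [PartialOrder P] [PartialOrder Q] [OrderBot P] [OrderBot Q]
    [OrderTop P] [OrderTop Q] :=
  WithBot (WithTop ({p : P // p ≠ ⊥ ∧ p ≠ ⊤} ⊕ {q : Q // q ≠ ⊥ ∧ q ≠ ⊤}))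

def diamondRank {P Q : Type*} [PartialOrder P] [PartialOrder Q] [OrderBot P] [OrderBot Q]
    [OrderTop P] [OrderTop Q] (rP : P → ℕ) (rQ : Q → ℕ) (s : ℕ) : Diamond P Q → ℕ :=
  WithBot.recBotCoe 0 (WithTop.recTopCoe s (Sum.elim (fun p => rP p.1) (fun q => rQ q.1)))

def diamondInl {P Q : Type*} [PartialOrder P] [PartialOrder Q] [OrderBot P] [OrderBot Q]
    [OrderTop P] [OrderTop Q] (p : {p : P // p ≠ ⊥ ∧ p ≠ ⊤}) : Diamond P Q :=
  (((Sum.inl p : {p : P // p ≠ ⊥ ∧ p ≠ ⊤} ⊕ {q : Q // q ≠ ⊥ ∧ q ≠ ⊤}) :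
    WithTop ({p : P // p ≠ ⊥ ∧ p ≠ ⊤} ⊕ {q : Q // q ≠ ⊥ ∧ q ≠ ⊤})) : Diamond P Q)

abbrev Box (a b : ℕ) := Fin a × Fin b

def boxRank {a b : ℕ} : Box a b → ℕ := fun p => p.1.val + p.2.val

abbrev BoxF {n : ℕ} (d : Fin n → ℕ) := ∀ i, Fin (d i + 1)

def boxFRank {n : ℕ} {d : Fin n → ℕ} : BoxF d → ℕ := fun x => ∑ i, (x i).val

def diamondInr {P Q : Type*} [PartialOrder P] [PartialOrder Q] [OrderBot P] [OrderBot Q]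
    [OrderTop P] [OrderTop Q] (q : {q : Q // q ≠ ⊥ ∧ q ≠ ⊤}) : Diamond P Q :=
  (((Sum.inr q : {p : P // p ≠ ⊥ ∧ p ≠ ⊤} ⊕ {q : Q // q ≠ ⊥ ∧ q ≠ ⊤}) :
    WithTop ({p : P // p ≠ ⊥ ∧ p ≠ ⊤} ⊕ {q : Q // q ≠ ⊥ ∧ q ≠ ⊤})) : Diamond P Q)

abbrev WedgeFam {ι : Type*} (P : ι → Type*) [∀ i, PartialOrder (P i)]
    [∀ i, OrderBot (P i)] :=
  WithBot (Σ i, {p : P i // p ≠ ⊥})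

def wedgeFamRank {ι : Type*} {P : ι → Type*} [∀ i, PartialOrder (P i)]
    [∀ i, OrderBot (P i)] (rank : ∀ i, P i → ℕ) : WedgeFam P → ℕ :=
  WithBot.recBotCoe 0 (fun s => rank s.1 s.2.1)

abbrev DiamondFam {ι : Type*} (P : ι → Type*) [∀ i, PartialOrder (P i)]
    [∀ i, OrderBot (P i)] [∀ i, OrderTop (P i)] :=
  WithBot (WithTop (Σ i, {p : P i // p ≠ ⊥ ∧ p ≠ ⊤}))

def diamondFamRank {ι : Type*} {P : ι → Type*} [∀ i, PartialOrder (P i)]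
    [∀ i, OrderBot (P i)] [∀ i, OrderTop (P i)] (rank : ∀ i, P i → ℕ) (s : ℕ) :
    DiamondFam P → ℕ :=
  WithBot.recBotCoe 0 (WithTop.recTopCoe s (fun x => rank x.1 x.2.1))


/-! The inclusions of `P` and `Q` into the wedge preserve ranks and, away from the bottom, commute with
upper shadows. Write `C d` for the rank-`d` elements of `Q` inside the wedge; then
`shadow (C d) = C (d + 1)` for `d ≥ 1`, so by the second Macaulay axiom the hypothesis on `C 1`
propagates: every `C d` with `d ≥ 1` is an initial segment of the wedge. Consequently an initial
segment `S` of `Q` stays an initial segment of the wedge, while for an initial segment `S` of `P`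
it is `S ∪ C d` that is one. Comparing `A ∪ C d` with `S ∪ C d` in the wedge then transfers both
Macaulay axioms to `P`, because the block `C d` contributes the same `C (d + 1)` to both shadows.
Rank `0` consists of the bottom element alone and is trivial. -/

section Ranked

variable {r : α → ℕ}

def rankLevel [Fintype α] (r : α → ℕ) (d : ℕ) : Finset α := univ.filter (r · = d)

@[simp] lemma mem_rankLevel [Fintype α] {d : ℕ} {x : α} : x ∈ rankLevel r d ↔ r x = d := by
  simp [rankLevel]

variable [PartialOrder α]

lemma isInitSeg_empty (lt : α → α → Prop) (d : ℕ) : IsInitSeg r lt d ∅ := by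
  simp [IsInitSeg]

lemma IsRankFn.rank_bot [OrderBot α] (hr : IsRankFn r) : r ⊥ = 0 := by
  obtain ⟨m, hm0, hm⟩ := hr.1
  rwa [← le_bot_iff.1 (hm ⊥)]

variable [Fintype α]

lemma mem_shadow {A : Finset α} {b : α} : b ∈ shadow A ↔ ∃ a ∈ A, a ⋖ b := by
  simp [_root_.shadow]

lemma shadow_union [DecidableEq α] (A B : Finset α) :
    shadow (A ∪ B) = shadow A ∪ shadow B := by
  ext b
  simp only [mem_shadow, mem_union, or_and_right, exists_or]

namespace IsRankFn

lemma eq_of_rank_eq_zero (hr : IsRankFn r) {x y : α} (hx : r x = 0) (hy : r y = 0) :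
    x = y := by
  obtain ⟨m, -, hm⟩ := hr.1
  suffices ∀ z, r z = 0 → z = m from (this x hx).trans (this y hy).symm
  intro z hz
  by_contra hne
  obtain ⟨c, -, hcz⟩ := exists_le_covBy_of_lt ((hm z).lt_of_ne' hne)
  have := hr.2 c z hcz
  omega

lemma exists_covBy_of_rank_eq_succ (hr : IsRankFn r) {x : α} {d : ℕ} (hx : r x = d + 1) :
    ∃ y, y ⋖ x ∧ r y = d := by
  obtain ⟨m, hm0, hm⟩ := hr.1
  have hne : m ≠ x := by rintro rfl; omega
  obtain ⟨y, -, hyx⟩ := exists_le_covBy_of_lt ((hm x).lt_of_ne hne)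
  exact ⟨y, hyx, by have := hr.2 y x hyx; omega⟩

lemma rank_eq_of_mem_shadow (hr : IsRankFn r) {S : Finset α} {d : ℕ} (hS : ∀ x ∈ S, r x = d)
    {y : α} (hy : y ∈ shadow S) : r y = d + 1 := by
  obtain ⟨x, hxS, hxy⟩ := mem_shadow.1 hy
  rw [hr.2 x y hxy, hS x hxS]

lemma shadow_rankLevel (hr : IsRankFn r) (d : ℕ) :
    shadow (rankLevel r d) = rankLevel r (d + 1) := by
  ext y
  refine ⟨fun hy => mem_rankLevel.2 (hr.rank_eq_of_mem_shadow (fun _ => mem_rankLevel.1) hy),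
    fun hy => ?_⟩
  obtain ⟨x, hxy, hx⟩ := hr.exists_covBy_of_rank_eq_succ (mem_rankLevel.1 hy)
  exact mem_shadow.2 ⟨x, mem_rankLevel.2 hx, hxy⟩

lemma eq_of_card_eq_of_rank_eq_zero (hr : IsRankFn r) {A S : Finset α}
    (hA : ∀ x ∈ A, r x = 0) (hS : ∀ x ∈ S, r x = 0) (hcard : S.card = A.card) : A = S := by
  refine eq_of_subset_of_card_le (fun a ha => ?_) hcard.le
  obtain ⟨s, hs⟩ := card_pos.1 (hcard ▸ card_pos.2 ⟨a, ha⟩)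
  rwa [hr.eq_of_rank_eq_zero (hA a ha) (hS s hs)]

lemma isInitSeg_shadow_of_rank_eq_zero (hr : IsRankFn r) {lt : α → α → Prop} {S : Finset α}
    (hS : IsInitSeg r lt 0 S) : IsInitSeg r lt 1 (shadow S) := by
  refine ⟨fun y hy => hr.rank_eq_of_mem_shadow hS.1 hy, fun a ha b hb _ => ?_⟩
  obtain ⟨s, hs, -⟩ := mem_shadow.1 ha
  obtain ⟨c, hcb, hc⟩ := hr.exists_covBy_of_rank_eq_succ hb
  rw [← hr.eq_of_rank_eq_zero (hS.1 s hs) hc] at hcb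
  exact mem_shadow.2 ⟨s, hs, hcb⟩

end IsRankFn

lemma shadow_image_orderEmbedding {β : Type*} [PartialOrder β] [Fintype β] [DecidableEq β]
    (f : α ↪o β) (hf : (Set.range f).OrdConnected) {X : Finset α}
    (hX : ∀ x ∈ X, ∀ c, f x ≤ c → c ∈ Set.range f) :
    shadow (X.image f) = (shadow X).image f := by
  ext c
  simp only [mem_shadow, mem_image, exists_exists_and_eq_and]
  constructor
  · rintro ⟨x, hx, hxc⟩
    obtain ⟨b, rfl⟩ := hX x hx c hxc.le
    exact ⟨b, ⟨x, hx, (hf.apply_covBy_apply_iff f).1 hxc⟩, rfl⟩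
  · rintro ⟨b, ⟨x, hx, hxb⟩, rfl⟩
    exact ⟨x, hx, (hf.apply_covBy_apply_iff f).2 hxb⟩

theorem MacaulayWith.isInitSeg_of_shadow_eq {lt : α → α → Prop} (h : MacaulayWith r lt)
    {C : ℕ → Finset α} (hC : ∀ d ≠ 0, shadow (C d) = C (d + 1)) (h1 : IsInitSeg r lt 1 (C 1)) :
    ∀ d ≠ 0, IsInitSeg r lt d (C d)
  | 1, _ => h1
  | d + 2, _ => hC (d + 1) d.succ_ne_zero ▸
      h.2.2.2.2 (d + 1) _ (h.isInitSeg_of_shadow_eq hC h1 (d + 1) d.succ_ne_zero)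

end Ranked

section Comap

variable {β : Type*} [DecidableEq β] {f : α → β}

lemma card_image_union_of_forall_notMem (hf : f.Injective) {C : Finset β} (hC : ∀ a, f a ∉ C)
    (X : Finset α) : (X.image f ∪ C).card = X.card + C.card := by
  rw [card_union_of_disjoint (disjoint_left.2 fun _ hb => ?_), card_image_of_injective X hf]
  obtain ⟨a, -, rfl⟩ := mem_image.1 hb
  exact hC a

variable [PartialOrder α] [Fintype α] [PartialOrder β] [Fintype β] {rα : α → ℕ} {rβ : β → ℕ}
  {lt : β → β → Prop}

theorem MacaulayWith.comap (h : MacaulayWith rβ lt) (hrα : IsRankFn rα) (hf : f.Injective)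
    (hrank : ∀ a, rβ (f a) = rα a)
    (hshadow : ∀ X : Finset α, (∀ x ∈ X, rα x ≠ 0) → shadow (X.image f) = (shadow X).image f)
    (C : ℕ → Finset β) (hCf : ∀ d ≠ 0, ∀ a, f a ∉ C d)
    (hCshadow : ∀ d ≠ 0, shadow (C d) = C (d + 1))
    (hinit : ∀ d ≠ 0, ∀ S, IsInitSeg rα (fun a b => lt (f a) (f b)) d S →
      IsInitSeg rβ lt d (S.image f ∪ C d)) :
    MacaulayWith rα (fun a b => lt (f a) (f b)) := by
  obtain ⟨⟨htri⟩, ⟨htrans⟩, ⟨hirr⟩, hmin, hsh⟩ := h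
  have hshadow_union : ∀ d ≠ 0, ∀ X : Finset α, (∀ x ∈ X, rα x = d) →
      shadow (X.image f ∪ C d) = (shadow X).image f ∪ C (d + 1) := fun d hd X hX => by
    rw [shadow_union, hshadow X fun x hx => hX x hx ▸ hd, hCshadow d hd]
  have hcard d (hd : d ≠ 0) := card_image_union_of_forall_notMem hf (hCf d hd)
  refine ⟨⟨fun a b hab hba => hf (htri _ _ hab hba)⟩, ⟨fun a b c => htrans _ _ _⟩,
    ⟨fun a => hirr _⟩, fun d A S hA hS hAS => ?_, fun d S hS => ?_⟩
  · rcases eq_or_ne d 0 with rfl | hd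
    · rw [hrα.eq_of_card_eq_of_rank_eq_zero hA hS.1 hAS]
    have hC := (hinit d hd ∅ (isInitSeg_empty _ _)).1
    have hA' : ∀ x ∈ A.image f ∪ C d, rβ x = d := by
      simp only [mem_union, mem_image]
      rintro x (⟨a, ha, rfl⟩ | hx)
      · rw [hrank, hA a ha]
      · exact hC x (by simpa using hx)
    have := hmin d _ _ hA' (hinit d hd S hS) (by rw [hcard d hd, hcard d hd, hAS])
    rwa [hshadow_union d hd A hA, hshadow_union d hd S hS.1, hcard _ d.succ_ne_zero,
      hcard _ d.succ_ne_zero, add_le_add_iff_right] at this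
  · rcases eq_or_ne d 0 with rfl | hd
    · exact hrα.isInitSeg_shadow_of_rank_eq_zero hS
    have hβ := hsh d _ (hinit d hd S hS)
    rw [hshadow_union d hd S hS.1] at hβ
    refine ⟨fun y hy => hrα.rank_eq_of_mem_shadow hS.1 hy, fun a ha b hb hab => ?_⟩
    rcases mem_union.1 (hβ.2 (f a) (mem_union_left _ (mem_image_of_mem f ha)) (f b)
      (by rw [hrank, hb]) hab) with hb' | hb'
    · exact hf.mem_finset_image.1 hb'
    · exact absurd hb' (hCf _ d.succ_ne_zero _)

theorem MacaulayWith.comap_of_isInitSeg_image (h : MacaulayWith rβ lt) (hrα : IsRankFn rα)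
    (hf : f.Injective) (hrank : ∀ a, rβ (f a) = rα a)
    (hshadow : ∀ X : Finset α, (∀ x ∈ X, rα x ≠ 0) → shadow (X.image f) = (shadow X).image f)
    (hinit : ∀ d ≠ 0, ∀ S, IsInitSeg rα (fun a b => lt (f a) (f b)) d S →
      IsInitSeg rβ lt d (S.image f)) :
    MacaulayWith rα (fun a b => lt (f a) (f b)) :=
  h.comap hrα hf hrank hshadow (fun _ => ∅) (fun _ _ _ => notMem_empty _)
    (fun _ _ => by simp [_root_.shadow]) fun d hd S hS => by simpa using hinit d hd S hS

end Comap

section Wedge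

variable {P Q : Type*} [PartialOrder P] [PartialOrder Q] [OrderBot P] [OrderBot Q]

@[simp] lemma wedgeInl_bot : (wedgeInl (⊥ : P) : Wedge P Q) = ⊥ := dif_pos rfl

@[simp] lemma wedgeInr_bot : (wedgeInr (⊥ : Q) : Wedge P Q) = ⊥ := dif_pos rfl

lemma wedgeInl_of_ne_bot {p : P} (hp : p ≠ ⊥) :
    (wedgeInl p : Wedge P Q) = ((Sum.inl ⟨p, hp⟩ : {p : P // p ≠ ⊥} ⊕ {q : Q // q ≠ ⊥}) :) :=
  dif_neg hp

lemma wedgeInr_of_ne_bot {q : Q} (hq : q ≠ ⊥) :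
    (wedgeInr q : Wedge P Q) = ((Sum.inr ⟨q, hq⟩ : {p : P // p ≠ ⊥} ⊕ {q : Q // q ≠ ⊥}) :) :=
  dif_neg hq

lemma wedgeInl_le_wedgeInl {a b : P} : (wedgeInl a : Wedge P Q) ≤ wedgeInl b ↔ a ≤ b := by
  by_cases ha : a = ⊥ <;> by_cases hb : b = ⊥ <;>
    simp [ha, hb, wedgeInl_of_ne_bot, le_bot_iff]

lemma wedgeInr_le_wedgeInr {a b : Q} : (wedgeInr a : Wedge P Q) ≤ wedgeInr b ↔ a ≤ b := by
  by_cases ha : a = ⊥ <;> by_cases hb : b = ⊥ <;>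
    simp [ha, hb, wedgeInr_of_ne_bot, le_bot_iff]

lemma wedgeInl_eq_wedgeInr_iff {p : P} {q : Q} :
    (wedgeInl p : Wedge P Q) = wedgeInr q ↔ p = ⊥ ∧ q = ⊥ := by
  by_cases hp : p = ⊥ <;> by_cases hq : q = ⊥ <;>
    simp [hp, hq, wedgeInl_of_ne_bot, wedgeInr_of_ne_bot]

lemma exists_eq_wedgeInl_or_exists_eq_wedgeInr (x : Wedge P Q) :
    (∃ p : P, x = wedgeInl p) ∨ ∃ q : Q, x = wedgeInr q := by
  rcases x with _ | ⟨p, hp⟩ | ⟨q, hq⟩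
  · exact .inl ⟨⊥, wedgeInl_bot.symm⟩
  · exact .inl ⟨p, (wedgeInl_of_ne_bot hp).symm⟩
  · exact .inr ⟨q, (wedgeInr_of_ne_bot hq).symm⟩

lemma wedgeInl_le_wedgeInr_iff {p : P} {q : Q} :
    (wedgeInl p : Wedge P Q) ≤ wedgeInr q ↔ p = ⊥ := by
  by_cases hp : p = ⊥ <;> by_cases hq : q = ⊥ <;>
    simp [hp, hq, wedgeInl_of_ne_bot, wedgeInr_of_ne_bot]

lemma wedgeInr_le_wedgeInl_iff {p : P} {q : Q} :
    (wedgeInr q : Wedge P Q) ≤ wedgeInl p ↔ q = ⊥ := by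
  by_cases hp : p = ⊥ <;> by_cases hq : q = ⊥ <;>
    simp [hp, hq, wedgeInl_of_ne_bot, wedgeInr_of_ne_bot]

variable (P Q) in
noncomputable def wedgeInlOrderEmb : P ↪o Wedge P Q :=
  OrderEmbedding.ofMapLEIff wedgeInl fun _ _ => wedgeInl_le_wedgeInl

variable (P Q) in
noncomputable def wedgeInrOrderEmb : Q ↪o Wedge P Q :=
  OrderEmbedding.ofMapLEIff wedgeInr fun _ _ => wedgeInr_le_wedgeInr

lemma isLowerSet_range_wedgeInl : IsLowerSet (Set.range (wedgeInl : P → Wedge P Q)) := by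
  rintro _ x hx ⟨p, rfl⟩
  rcases exists_eq_wedgeInl_or_exists_eq_wedgeInr x with ⟨a, rfl⟩ | ⟨q, rfl⟩
  · exact ⟨a, rfl⟩
  · rw [wedgeInr_le_wedgeInl_iff.1 hx, wedgeInr_bot]
    exact ⟨⊥, wedgeInl_bot⟩

lemma isLowerSet_range_wedgeInr : IsLowerSet (Set.range (wedgeInr : Q → Wedge P Q)) := by
  rintro _ x hx ⟨q, rfl⟩
  rcases exists_eq_wedgeInl_or_exists_eq_wedgeInr x with ⟨p, rfl⟩ | ⟨b, rfl⟩
  · rw [wedgeInl_le_wedgeInr_iff.1 hx, wedgeInl_bot]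
    exact ⟨⊥, wedgeInr_bot⟩
  · exact ⟨b, rfl⟩

lemma mem_range_wedgeInl_of_wedgeInl_le {p : P} (hp : p ≠ ⊥) {x : Wedge P Q}
    (hx : wedgeInl p ≤ x) : x ∈ Set.range wedgeInl := by
  rcases exists_eq_wedgeInl_or_exists_eq_wedgeInr x with ⟨a, rfl⟩ | ⟨q, rfl⟩
  · exact ⟨a, rfl⟩
  · exact absurd (wedgeInl_le_wedgeInr_iff.1 hx) hp

lemma mem_range_wedgeInr_of_wedgeInr_le {q : Q} (hq : q ≠ ⊥) {x : Wedge P Q}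
    (hx : wedgeInr q ≤ x) : x ∈ Set.range wedgeInr := by
  rcases exists_eq_wedgeInl_or_exists_eq_wedgeInr x with ⟨p, rfl⟩ | ⟨b, rfl⟩
  · exact absurd (wedgeInr_le_wedgeInl_iff.1 hx) hq
  · exact ⟨b, rfl⟩

lemma wedgeInl_injective : (wedgeInl : P → Wedge P Q).Injective := (wedgeInlOrderEmb P Q).injective

lemma wedgeInr_injective : (wedgeInr : Q → Wedge P Q).Injective := (wedgeInrOrderEmb P Q).injective

variable {rP : P → ℕ} {rQ : Q → ℕ}

lemma wedgeRank_wedgeInl (hP0 : rP ⊥ = 0) (p : P) : wedgeRank rP rQ (wedgeInl p) = rP p := by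
  by_cases hp : p = ⊥
  · rw [hp, wedgeInl_bot, hP0]; rfl
  · rw [wedgeInl_of_ne_bot hp]; rfl

lemma wedgeRank_wedgeInr (hQ0 : rQ ⊥ = 0) (q : Q) : wedgeRank rP rQ (wedgeInr q) = rQ q := by
  by_cases hq : q = ⊥
  · rw [hq, wedgeInr_bot, hQ0]; rfl
  · rw [wedgeInr_of_ne_bot hq]; rfl

variable [DecidableEq (Wedge P Q)]

lemma shadow_image_wedgeInl [Fintype P] [Fintype (Wedge P Q)] {X : Finset P}
    (hX : ∀ x ∈ X, x ≠ ⊥) :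
    shadow (X.image wedgeInl : Finset (Wedge P Q)) = (shadow X).image wedgeInl :=
  shadow_image_orderEmbedding (wedgeInlOrderEmb P Q) isLowerSet_range_wedgeInl.ordConnected
    fun x hx _ => mem_range_wedgeInl_of_wedgeInl_le (hX x hx)

lemma shadow_image_wedgeInr [Fintype Q] [Fintype (Wedge P Q)] {X : Finset Q}
    (hX : ∀ x ∈ X, x ≠ ⊥) :
    shadow (X.image wedgeInr : Finset (Wedge P Q)) = (shadow X).image wedgeInr :=
  shadow_image_orderEmbedding (wedgeInrOrderEmb P Q) isLowerSet_range_wedgeInr.ordConnected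
    fun x hx _ => mem_range_wedgeInr_of_wedgeInr_le (hX x hx)

variable [Fintype Q] {lt : Wedge P Q → Wedge P Q → Prop} {d : ℕ}

lemma wedgeInl_notMem_image_wedgeInr (hQ0 : rQ ⊥ = 0) (hd : d ≠ 0) (p : P) :
    wedgeInl p ∉ (rankLevel rQ d).image (wedgeInr : Q → Wedge P Q) := by
  simp only [mem_image, mem_rankLevel, not_exists, not_and]
  intro q hq hqp
  rw [eq_comm, wedgeInl_eq_wedgeInr_iff] at hqp
  exact hd (by rw [← hq, hqp.2, hQ0])

lemma isInitSeg_image_wedgeInl_union (hP0 : rP ⊥ = 0) (hQ0 : rQ ⊥ = 0)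
    (hC : IsInitSeg (wedgeRank rP rQ) lt d ((rankLevel rQ d).image wedgeInr)) {S : Finset P}
    (hS : IsInitSeg rP (fun a b => lt (wedgeInl a) (wedgeInl b)) d S) :
    IsInitSeg (wedgeRank rP rQ) lt d (S.image wedgeInl ∪ (rankLevel rQ d).image wedgeInr) := by
  refine ⟨fun x hx => ?_, fun a ha b hb hab => ?_⟩
  · rcases mem_union.1 hx with hx | hx
    · obtain ⟨p, hp, rfl⟩ := mem_image.1 hx
      rw [wedgeRank_wedgeInl hP0, hS.1 p hp]
    · exact hC.1 x hx
  rcases mem_union.1 ha with ha | ha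
  · obtain ⟨s, hs, rfl⟩ := mem_image.1 ha
    rcases exists_eq_wedgeInl_or_exists_eq_wedgeInr b with ⟨p, rfl⟩ | ⟨q, rfl⟩
    · rw [wedgeRank_wedgeInl hP0] at hb
      exact mem_union_left _ (mem_image_of_mem _ (hS.2 s hs p hb hab))
    · rw [wedgeRank_wedgeInr hQ0] at hb
      exact mem_union_right _ (mem_image_of_mem _ (mem_rankLevel.2 hb))
  · exact mem_union_right _ (hC.2 a ha b hb hab)

lemma isInitSeg_image_wedgeInr (hQ0 : rQ ⊥ = 0)
    (hC : IsInitSeg (wedgeRank rP rQ) lt d ((rankLevel rQ d).image wedgeInr)) {S : Finset Q}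
    (hS : IsInitSeg rQ (fun a b => lt (wedgeInr a) (wedgeInr b)) d S) :
    IsInitSeg (wedgeRank rP rQ) lt d (S.image wedgeInr) := by
  refine ⟨fun x hx => ?_, fun a ha b hb hab => ?_⟩
  · obtain ⟨q, hq, rfl⟩ := mem_image.1 hx
    rw [wedgeRank_wedgeInr hQ0, hS.1 q hq]
  obtain ⟨s, hs, rfl⟩ := mem_image.1 ha
  obtain ⟨q, hq, rfl⟩ := mem_image.1
    (hC.2 _ (mem_image_of_mem _ (mem_rankLevel.2 (hS.1 s hs))) b hb hab)
  exact mem_image_of_mem _ (hS.2 s hs q (mem_rankLevel.1 hq) hab)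

open Classical in
lemma filter_wedgeRank_eq_image_wedgeInr [Fintype (Wedge P Q)] (hQ0 : rQ ⊥ = 0) (d : ℕ) :
    univ.filter (fun x => wedgeRank rP rQ x = d ∧ ∃ q : Q, x = wedgeInr q) =
      (rankLevel rQ d).image wedgeInr := by
  ext x
  simp only [mem_filter, mem_univ, true_and, mem_image, mem_rankLevel]
  constructor
  · rintro ⟨hx, q, rfl⟩
    exact ⟨q, (wedgeRank_wedgeInr hQ0 q).symm.trans hx, rfl⟩
  · rintro ⟨q, hq, rfl⟩
    exact ⟨(wedgeRank_wedgeInr hQ0 q).trans hq, q, rfl⟩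

end Wedge

open Classical in
/-- If the wedge of ranked posets P and Q is Macaulay with respect to a total order under
which the rank-1 elements of Q form an initial segment, then P and Q are Macaulay with
respect to the restricted orders. -/
theorem stmt13 {P Q : Type*} [PartialOrder P] [PartialOrder Q] [OrderBot P] [OrderBot Q]
    [Fintype P] [Fintype Q] (rP : P → ℕ) (rQ : Q → ℕ)
    (hrP : IsRankFn rP) (hrQ : IsRankFn rQ)
    (lt : Wedge P Q → Wedge P Q → Prop)
    (hM : MacaulayWith (wedgeRank rP rQ) lt)
    (hseg : IsInitSeg (wedgeRank rP rQ) lt 1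
      (Finset.univ.filter (fun x => wedgeRank rP rQ x = 1 ∧ ∃ q : Q, x = wedgeInr q))) :
    MacaulayWith rP (fun a b => lt (wedgeInl a) (wedgeInl b)) ∧
    MacaulayWith rQ (fun a b => lt (wedgeInr a) (wedgeInr b)) := by
  classical
  have hP0 := hrP.rank_bot
  have hQ0 := hrQ.rank_bot
  have hCshadow : ∀ d ≠ 0, shadow ((rankLevel rQ d).image (wedgeInr : Q → Wedge P Q)) =
      (rankLevel rQ (d + 1)).image wedgeInr := fun d hd => by
    rw [shadow_image_wedgeInr fun q hq hq0 => hd (by rw [← mem_rankLevel.1 hq, hq0, hQ0]),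
      hrQ.shadow_rankLevel]
  have hC := hM.isInitSeg_of_shadow_eq hCshadow
    (by rwa [filter_wedgeRank_eq_image_wedgeInr hQ0] at hseg)
  constructor
  · exact hM.comap hrP wedgeInl_injective (wedgeRank_wedgeInl hP0)
      (fun X hX => shadow_image_wedgeInl fun x hx hx0 => hX x hx (hx0 ▸ hP0)) _
      (fun d hd => wedgeInl_notMem_image_wedgeInr hQ0 hd) hCshadow
      (fun d hd _ => isInitSeg_image_wedgeInl_union hP0 hQ0 (hC d hd))
  · exact hM.comap_of_isInitSeg_image hrQ wedgeInr_injective (wedgeRank_wedgeInr hQ0)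
      (fun X hX => shadow_image_wedgeInr fun x hx hx0 => hX x hx (hx0 ▸ hQ0))
      (fun d hd _ => isInitSeg_image_wedgeInr hQ0 (hC d hd))
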